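/- If f ∈ L_{q,1,v}, then for every x ∈ ℝ_q^+ the series defining F_{q,v}f(x) converges absolutely; moreover F_{q,v}f(q^n) → 0 as n → −∞, and the limit lim_{n→+∞} F_{q,v}f(q^n) exists (i.e. F_{q,v}f extends continuously to 0). -/

import Mathlib

open scoped BigOperators

noncomputable section

/-- The finite q-Pochhammer symbol `(a; q)_n`. -/
def qPoch (a q : ℝ) (n : ℕ) : ℝ := ∏ k ∈ Finset.range n, (1 - a * q ^ k)

/-- The infinite q-Pochhammer symbol `(a; q)_∞`. -/
def qPochInf (a q : ℝ) : ℝ := ∏' k : ℕ, (1 - a * q ^ k)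

/-- The normalized q-Bessel function `j_v(x, q²)`. -/
def jv (q v x : ℝ) : ℝ :=
  ∑' n : ℕ, (-1 : ℝ) ^ n * q ^ (n * (n + 1)) /
    (qPoch (q ^ (2 * v + 2)) (q ^ 2) n * qPoch ((q : ℝ) ^ (2 : ℕ)) (q ^ 2) n) * x ^ (2 * n)

/-- The set `ℝ_q^+ = {q^n : n ∈ ℤ}`. -/
def Rq (q : ℝ) : Set ℝ := {x | ∃ n : ℤ, x = q ^ n}

/-- The q-Jackson integral `∫₀^∞ f(t) d_q t = (1-q) Σ_{n∈ℤ} q^n f(q^n)`. -/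
def jackson (q : ℝ) (f : ℝ → ℝ) : ℝ := (1 - q) * ∑' n : ℤ, q ^ n * f (q ^ n)

/-- Absolute convergence of the defining series of the q-Jackson integral. -/
def JacksonSummable (q : ℝ) (f : ℝ → ℝ) : Prop :=
  Summable fun n : ℤ => q ^ n * |f (q ^ n)|

/-- The constant `c_{q,v}`. -/
def cqv (q v : ℝ) : ℝ :=
  (1 / (1 - q)) * qPochInf (q ^ (2 * v + 2)) (q ^ 2) / qPochInf ((q : ℝ) ^ (2 : ℕ)) (q ^ 2)

/-- Membership in `L_{q,p,v}`: absolute convergence of `∫₀^∞ |f(x)|^p x^{2v+1} d_q x`. -/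
def MemLqpv (q v p : ℝ) (f : ℝ → ℝ) : Prop :=
  JacksonSummable q (fun t => |f t| ^ p * t ^ (2 * v + 1))

/-- The q-Bessel Fourier transform `F_{q,v}`. -/
def Fqv (q v : ℝ) (f : ℝ → ℝ) (x : ℝ) : ℝ :=
  cqv q v * jackson q (fun t => f t * jv q v (x * t) * t ^ (2 * v + 1))

/-- The q-translation operator `T_{q,x}^v`. -/
def Tqv (q v x : ℝ) (f : ℝ → ℝ) (y : ℝ) : ℝ :=
  cqv q v * jackson q (fun t => Fqv q v f t * jv q v (y * t) * jv q v (x * t) * t ^ (2 * v + 1))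

/-- The kernel `D_v(x,y,z)`. -/
def Dv (q v x y z : ℝ) : ℝ :=
  (cqv q v) ^ (2 : ℕ) *
    jackson q (fun s => jv q v (x * s) * jv q v (y * s) * jv q v (z * s) * s ^ (2 * v + 1))

/-- The q-convolution product `f ∗_q g`. -/
def qConv (q v : ℝ) (f g : ℝ → ℝ) (x : ℝ) : ℝ :=
  cqv q v * jackson q (fun y => Tqv q v x f y * g y * y ^ (2 * v + 1))

/-- The inner product of the Hilbert space `L_{q,2,v}`. -/
def inner2 (q v : ℝ) (f g : ℝ → ℝ) : ℝ :=
  jackson q (fun t => f t * g t * t ^ (2 * v + 1))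

/-- The q-translation operator expressed through the kernel `D_v`. -/
def TD (q v x : ℝ) (f : ℝ → ℝ) (y : ℝ) : ℝ :=
  jackson q (fun z => f z * Dv q v x y z * z ^ (2 * v + 1))

/-- The q-Bessel operator `Δ_{q,v}`. -/
def DeltaQ (q v : ℝ) (f : ℝ → ℝ) (x : ℝ) : ℝ :=
  (1 / x ^ (2 : ℕ)) *
    (f (q⁻¹ * x) - (1 + q ^ (2 * v)) * f x + q ^ (2 * v) * f (q * x))

/-!
Write `Q = q²` and `A = q^{2v+2}`. Then `j_v(x) = ∑ₙ eₙ (q²x²)ⁿ / (A; Q)ₙ`, where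
`eₙ = (-1)ⁿ Q^{n(n-1)/2} / (Q; Q)ₙ` are the coefficients of Euler's series
`E(w) = ∑ₙ eₙ wⁿ = (w; Q)_∞`. Since `E(A) = (A; Q)ₙ E(AQⁿ)`, exchanging the order of summation in
an absolutely convergent double series gives the Hahn–Exton identity
`E(A) j_v(x) = ∑ₘ eₘ Aᵐ E(q²x²Qᵐ)`. On the lattice `x = q^t` every argument `q²x²Qᵐ = Q^{t+1+m}`
is a power of `Q`; there `E` vanishes at non-positive exponents, is bounded, and tends to
`E(0) = 1`. Dominated convergence then gives `j_v(q^t) → 0` as `t → -∞` and `j_v(q^t) → 1` as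
`t → +∞`, so `j_v` is bounded on `ℝ_q^+`. A second dominated convergence in the Jackson sum, with
majorant `M |f(t)| t^{2v+1}`, yields all three claims.
-/

open Filter Topology

theorem exp_neg_div_one_sub_le_one_sub {x w : ℝ} (hx0 : 0 ≤ x) (hxw : x ≤ w) (hw1 : w < 1) :
    Real.exp (-(x / (1 - w))) ≤ 1 - x := by
  have hx1 : 0 < 1 - x := by linarith
  have hlog : -(x / (1 - x)) ≤ Real.log (1 - x) := by
    have := Real.one_sub_inv_le_log_of_pos hx1
    rwa [show 1 - (1 - x)⁻¹ = -(x / (1 - x)) by field_simp; ring] at this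
  calc Real.exp (-(x / (1 - w))) ≤ Real.exp (-(x / (1 - x))) := by
        gcongr
    _ ≤ 1 - x := (Real.le_log_iff_exp_le hx1).1 hlog

theorem summable_pow_choose_two_mul_pow {Q : ℝ} (hQ0 : 0 ≤ Q) (hQ1 : Q < 1) (y : ℝ) :
    Summable fun n : ℕ => Q ^ n.choose 2 * y ^ n := by
  refine summable_of_ratio_norm_eventually_le (r := 1 / 2) (by norm_num) ?_
  have hsmall : ∀ᶠ n : ℕ in atTop, Q ^ n * |y| < 1 / 2 := by
    have := (tendsto_pow_atTop_nhds_zero_of_lt_one hQ0 hQ1).mul_const |y|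
    rw [zero_mul] at this
    exact this.eventually (gt_mem_nhds (by norm_num))
  filter_upwards [hsmall] with n hn
  rw [Nat.choose_succ_succ', Nat.choose_one_right, pow_add, pow_succ]
  simp only [Real.norm_eq_abs, abs_mul, abs_pow, abs_of_nonneg hQ0]
  calc Q ^ n * Q ^ n.choose (1 + 1) * (|y| ^ n * |y|)
        = (Q ^ n * |y|) * (Q ^ n.choose 2 * |y| ^ n) := by ring
    _ ≤ 1 / 2 * (Q ^ n.choose 2 * |y| ^ n) := by gcongr

theorem summable_abs_mul_pow_of_abs_le {Q K : ℝ} {c : ℕ → ℝ} (hQ0 : 0 ≤ Q) (hQ1 : Q < 1)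
    (hc : ∀ n, |c n| ≤ K * Q ^ n.choose 2) (y : ℝ) : Summable fun n => |c n * y ^ n| := by
  refine .of_nonneg_of_le (fun n => abs_nonneg _) (fun n => ?_)
    ((summable_pow_choose_two_mul_pow hQ0 hQ1 |y|).mul_left K)
  rw [abs_mul, abs_pow, ← mul_assoc]
  gcongr
  exact hc n

theorem continuousOn_tsum_mul_pow {c : ℕ → ℝ} (hc : Summable fun n => |c n|) :
    ContinuousOn (fun y => ∑' n, c n * y ^ n) (Set.Icc (-1) 1) := by
  refine continuousOn_tsum (fun n => (continuous_const.mul (continuous_pow n)).continuousOn) hc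
    fun n y hy => ?_
  rw [Real.norm_eq_abs, abs_mul, abs_pow]
  exact mul_le_of_le_one_right (abs_nonneg _) (pow_le_one₀ (abs_nonneg y) (abs_le.2 hy))

theorem mul_add_one_eq_two_mul_choose_two_add (n : ℕ) : n * (n + 1) = 2 * n.choose 2 + 2 * n := by
  induction n with
  | zero => rfl
  | succ n ih =>
    rw [Nat.choose_succ_succ', Nat.choose_one_right]
    nlinarith

theorem exists_abs_le_of_tendsto_atBot_atTop {g : ℤ → ℝ} {a b : ℝ}
    (ha : Tendsto g atBot (𝓝 a)) (hb : Tendsto g atTop (𝓝 b)) : ∃ M, ∀ k, |g k| ≤ M := by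
  have hbdd : IsBoundedUnder (· ≤ ·) cofinite fun k => |g k| := by
    rw [Int.cofinite_eq, IsBoundedUnder, map_sup]
    exact isBounded_sup ha.abs.isBoundedUnder_le hb.abs.isBoundedUnder_le
  obtain ⟨M, hM⟩ := hbdd.bddAbove_range_of_cofinite
  exact ⟨M, fun k => hM ⟨k, rfl⟩⟩

section WeightedShift

variable {a g : ℤ → ℝ} {M : ℝ}

theorem summable_abs_mul_comp_add (ha : Summable fun m => |a m|) (hg : ∀ k, |g k| ≤ M) (n : ℤ) :
    Summable fun m => |a m * g (n + m)| :=
  .of_nonneg_of_le (fun _ => abs_nonneg _)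
    (fun m => by rw [abs_mul]; exact mul_le_mul_of_nonneg_left (hg _) (abs_nonneg _))
    (ha.mul_right M)

theorem tendsto_tsum_mul_comp_add {L : ℝ} {l : Filter ℤ} (ha : Summable fun m => |a m|)
    (hg : ∀ k, |g k| ≤ M) (hgl : Tendsto g l (𝓝 L))
    (hl : ∀ m, Tendsto (fun n => n + m) l l) :
    Tendsto (fun n => ∑' m, a m * g (n + m)) l (𝓝 (∑' m, a m * L)) :=
  tendsto_tsum_of_dominated_convergence (ha.mul_right M)
    (fun m => (hgl.comp (hl m)).const_mul (a m))
    (.of_forall fun n m => by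
      rw [Real.norm_eq_abs, abs_mul]
      exact mul_le_mul_of_nonneg_left (hg _) (abs_nonneg _))

end WeightedShift

theorem qPoch_succ (a q : ℝ) (n : ℕ) : qPoch a q (n + 1) = qPoch a q n * (1 - a * q ^ n) :=
  Finset.prod_range_succ _ _

section Pochhammer

variable {Q w : ℝ}

theorem qPoch_pos (hQ0 : 0 ≤ Q) (hQ1 : Q ≤ 1) (hw0 : 0 ≤ w) (hw1 : w < 1) (n : ℕ) :
    0 < qPoch w Q n :=
  Finset.prod_pos fun k _ => by
    have : w * Q ^ k ≤ w := mul_le_of_le_one_right hw0 (pow_le_one₀ hQ0 hQ1)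
    linarith

theorem exp_le_qPoch (hQ0 : 0 ≤ Q) (hQ1 : Q < 1) (hw0 : 0 ≤ w) (hw1 : w < 1) (n : ℕ) :
    Real.exp (-(w / ((1 - w) * (1 - Q)))) ≤ qPoch w Q n := by
  have hgeom : ∑ k ∈ Finset.range n, Q ^ k ≤ (1 - Q)⁻¹ := by
    rw [← tsum_geometric_of_lt_one hQ0 hQ1]
    exact Summable.sum_le_tsum _ (fun k _ => pow_nonneg hQ0 k)
      (summable_geometric_of_lt_one hQ0 hQ1)
  calc Real.exp (-(w / ((1 - w) * (1 - Q))))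
      ≤ Real.exp (∑ k ∈ Finset.range n, -(w * Q ^ k / (1 - w))) := by
        gcongr
        rw [Finset.sum_neg_distrib, neg_le_neg_iff, ← Finset.sum_div, ← Finset.mul_sum,
          mul_comm (1 - w), ← div_div, div_eq_mul_inv w]
        gcongr
    _ = ∏ k ∈ Finset.range n, Real.exp (-(w * Q ^ k / (1 - w))) := Real.exp_sum _ _
    _ ≤ qPoch w Q n := Finset.prod_le_prod (fun _ _ => (Real.exp_pos _).le) fun k _ =>
        exp_neg_div_one_sub_le_one_sub (mul_nonneg hw0 (pow_nonneg hQ0 k))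
          (mul_le_of_le_one_right hw0 (pow_le_one₀ hQ0 hQ1.le)) hw1

end Pochhammer

namespace QBessel

def eulerCoeff (Q : ℝ) (m : ℕ) : ℝ := (-1) ^ m * Q ^ m.choose 2 / qPoch Q Q m

/-- Euler's series for the infinite product `(w; Q)_∞`. -/
def euler (Q w : ℝ) : ℝ := ∑' m, eulerCoeff Q m * w ^ m

section Euler

variable {Q : ℝ}

theorem exists_abs_eulerCoeff_le (hQ0 : 0 ≤ Q) (hQ1 : Q < 1) :
    ∃ K, ∀ m, |eulerCoeff Q m| ≤ K * Q ^ m.choose 2 := by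
  refine ⟨(Real.exp (-(Q / ((1 - Q) * (1 - Q)))))⁻¹, fun m => ?_⟩
  have hP := qPoch_pos hQ0 hQ1.le hQ0 hQ1 m
  rw [eulerCoeff, abs_div, abs_mul, abs_pow, abs_neg, abs_one, one_pow, one_mul,
    abs_of_nonneg (pow_nonneg hQ0 _), abs_of_pos hP, div_eq_mul_inv, mul_comm]
  gcongr
  exact exp_le_qPoch hQ0 hQ1 hQ0 hQ1 m

theorem summable_abs_eulerCoeff_mul_pow (hQ0 : 0 ≤ Q) (hQ1 : Q < 1) (w : ℝ) :
    Summable fun m => |eulerCoeff Q m * w ^ m| :=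
  have ⟨_, hK⟩ := exists_abs_eulerCoeff_le hQ0 hQ1
  summable_abs_mul_pow_of_abs_le hQ0 hQ1 hK w

theorem summable_eulerCoeff_mul_pow (hQ0 : 0 ≤ Q) (hQ1 : Q < 1) (w : ℝ) :
    Summable fun m => eulerCoeff Q m * w ^ m :=
  (summable_abs_eulerCoeff_mul_pow hQ0 hQ1 w).of_abs

theorem euler_zero : euler Q 0 = 1 := by
  rw [euler, tsum_eq_single 0 fun m hm => by simp [hm]]
  simp [eulerCoeff, qPoch]

theorem continuousOn_euler (hQ0 : 0 ≤ Q) (hQ1 : Q < 1) :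
    ContinuousOn (euler Q) (Set.Icc (-1) 1) :=
  continuousOn_tsum_mul_pow (by simpa using summable_abs_eulerCoeff_mul_pow hQ0 hQ1 1)

theorem continuousAt_euler_zero (hQ0 : 0 ≤ Q) (hQ1 : Q < 1) : ContinuousAt (euler Q) 0 :=
  (continuousOn_euler hQ0 hQ1).continuousAt (Icc_mem_nhds (by norm_num) (by norm_num))

theorem eulerCoeff_succ_mul (hQ0 : 0 ≤ Q) (hQ1 : Q < 1) (m : ℕ) :
    eulerCoeff Q (m + 1) * (1 - Q ^ (m + 1)) = -(eulerCoeff Q m * Q ^ m) := by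
  have hP := (qPoch_pos hQ0 hQ1.le hQ0 hQ1 m).ne'
  have hsucc : Q ^ (m + 1) = Q * Q ^ m := pow_succ' Q m
  have hfac : 1 - Q * Q ^ m ≠ 0 := by
    rw [← hsucc]
    exact (sub_pos.2 (pow_lt_one₀ hQ0 hQ1 m.succ_ne_zero)).ne'
  rw [eulerCoeff, eulerCoeff, qPoch_succ, Nat.choose_succ_succ', Nat.choose_one_right, hsucc,
    pow_add, pow_succ (-1 : ℝ)]
  field_simp
  ring

theorem euler_eq_one_sub_mul (hQ0 : 0 ≤ Q) (hQ1 : Q < 1) (w : ℝ) :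
    euler Q w = (1 - w) * euler Q (Q * w) := by
  have hdiff := (summable_eulerCoeff_mul_pow hQ0 hQ1 w).sub
    (summable_eulerCoeff_mul_pow hQ0 hQ1 (Q * w))
  have hshift : ∀ m : ℕ, eulerCoeff Q (m + 1) * w ^ (m + 1) -
      eulerCoeff Q (m + 1) * (Q * w) ^ (m + 1) = -w * (eulerCoeff Q m * (Q * w) ^ m) := by
    intro m
    linear_combination w ^ (m + 1) * eulerCoeff_succ_mul hQ0 hQ1 m
  have : euler Q w - euler Q (Q * w) = -w * euler Q (Q * w) := by
    rw [euler, euler, ← (summable_eulerCoeff_mul_pow hQ0 hQ1 w).tsum_sub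
      (summable_eulerCoeff_mul_pow hQ0 hQ1 (Q * w)), hdiff.tsum_eq_zero_add, tsum_congr hshift,
      tsum_mul_left]
    simp
  linear_combination this

theorem euler_eq_qPoch_mul (hQ0 : 0 ≤ Q) (hQ1 : Q < 1) (w : ℝ) (n : ℕ) :
    euler Q w = qPoch w Q n * euler Q (w * Q ^ n) := by
  induction n with
  | zero => simp [qPoch]
  | succ n ih =>
    rw [ih, euler_eq_one_sub_mul hQ0 hQ1 (w * Q ^ n), qPoch_succ, pow_succ]
    ring_nf

theorem euler_zpow_eq_zero (hQ0 : 0 < Q) (hQ1 : Q < 1) {s : ℤ} (hs : s ≤ 0) :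
    euler Q (Q ^ s) = 0 := by
  obtain ⟨k, rfl⟩ := Int.exists_eq_neg_ofNat hs
  rw [euler_eq_qPoch_mul hQ0.le hQ1 _ (k + 1), qPoch_succ, zpow_neg, zpow_natCast,
    inv_mul_cancel₀ (pow_ne_zero k hQ0.ne')]
  simp

theorem euler_ne_zero (hQ0 : 0 ≤ Q) (hQ1 : Q < 1) {w : ℝ} (hw : ∀ n, qPoch w Q n ≠ 0) :
    euler Q w ≠ 0 := by
  have hlim : Tendsto (fun n : ℕ => euler Q (w * Q ^ n)) atTop (𝓝 1) := by
    rw [← euler_zero (Q := Q)]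
    refine (continuousAt_euler_zero hQ0 hQ1).tendsto.comp ?_
    simpa using (tendsto_pow_atTop_nhds_zero_of_lt_one hQ0 hQ1).const_mul w
  obtain ⟨n, hn⟩ := (hlim.eventually_ne one_ne_zero).exists
  rw [euler_eq_qPoch_mul hQ0 hQ1 w n]
  exact mul_ne_zero (hw n) hn

theorem exists_abs_euler_zpow_le (hQ0 : 0 < Q) (hQ1 : Q < 1) :
    ∃ B, ∀ s : ℤ, |euler Q (Q ^ s)| ≤ B := by
  obtain ⟨B, hB⟩ := isCompact_Icc.exists_bound_of_continuousOn (continuousOn_euler hQ0.le hQ1)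
  refine ⟨B, fun s => ?_⟩
  rcases le_or_gt s 0 with hs | hs
  · rw [euler_zpow_eq_zero hQ0 hQ1 hs, abs_zero]
    exact (norm_nonneg _).trans (hB 0 (by norm_num))
  · exact hB _ ⟨by linarith [zpow_pos hQ0 s], zpow_le_one₀ hQ0 hQ1.le hs.le⟩

/-- Both sides expand into the double series
`∑ eulerCoeff Q n * eulerCoeff Q m * u ^ n * w ^ m * Q ^ (n * m)`, which is symmetric in `u, w`. -/
theorem tsum_eulerCoeff_mul_euler_comm (hQ0 : 0 ≤ Q) (hQ1 : Q < 1) (u w : ℝ) :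
    ∑' n, eulerCoeff Q n * u ^ n * euler Q (w * Q ^ n) =
      ∑' m, eulerCoeff Q m * w ^ m * euler Q (u * Q ^ m) := by
  let D : ℝ → ℝ → ℕ → ℕ → ℝ := fun u w n m =>
    eulerCoeff Q n * u ^ n * (eulerCoeff Q m * w ^ m) * Q ^ (n * m)
  have hrow : ∀ u w n, eulerCoeff Q n * u ^ n * euler Q (w * Q ^ n) = ∑' m, D u w n m := by
    intro u w n
    rw [euler, ← tsum_mul_left]
    refine tsum_congr fun m => ?_
    rw [mul_pow, ← pow_mul]
    ring
  have hD : Summable (Function.uncurry (D u w)) := by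
    have hnorm : ∀ y, Summable fun n => ‖eulerCoeff Q n * y ^ n‖ := fun y => by
      simpa only [Real.norm_eq_abs] using summable_abs_eulerCoeff_mul_pow hQ0 hQ1 y
    refine .of_norm_bounded ((hnorm u).mul_norm (hnorm w)) fun p => ?_
    simp only [Function.uncurry, D, norm_mul (_ * _) (Q ^ _)]
    refine mul_le_of_le_one_right (norm_nonneg _) ?_
    rw [norm_pow, Real.norm_of_nonneg hQ0]
    exact pow_le_one₀ hQ0 hQ1.le
  simp only [hrow]
  rw [← hD.tsum_comm]
  refine tsum_congr fun m => tsum_congr fun n => ?_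
  simp only [D]
  ring

end Euler

def qBessel (Q A y : ℝ) : ℝ := ∑' n, eulerCoeff Q n / qPoch A Q n * y ^ n

section qBessel

variable {Q A : ℝ}

theorem euler_mul_qBessel (hQ0 : 0 ≤ Q) (hQ1 : Q < 1) (hA : ∀ n, qPoch A Q n ≠ 0) (y : ℝ) :
    euler Q A * qBessel Q A y = ∑' m, eulerCoeff Q m * A ^ m * euler Q (y * Q ^ m) := by
  rw [← tsum_eulerCoeff_mul_euler_comm hQ0 hQ1, qBessel, ← tsum_mul_left]
  refine tsum_congr fun n => ?_
  rw [euler_eq_qPoch_mul hQ0 hQ1 A n]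
  field_simp [hA n]

theorem qBessel_zpow (hQ0 : 0 < Q) (hQ1 : Q < 1) (hA : ∀ n, qPoch A Q n ≠ 0) (s : ℤ) :
    qBessel Q A (Q ^ s) =
      (euler Q A)⁻¹ * ∑' m : ℕ, eulerCoeff Q m * A ^ m * euler Q (Q ^ (s + m)) := by
  rw [eq_inv_mul_iff_mul_eq₀ (euler_ne_zero hQ0.le hQ1 hA), euler_mul_qBessel hQ0.le hQ1 hA]
  simp only [zpow_add₀ hQ0.ne', zpow_natCast]

theorem tendsto_tsum_eulerCoeff_mul_euler_zpow (hQ0 : 0 < Q) (hQ1 : Q < 1) {l : Filter ℤ}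
    {g : ℕ → ℝ} (hg : ∀ m : ℕ, Tendsto (fun s : ℤ => euler Q (Q ^ (s + m))) l (𝓝 (g m))) :
    Tendsto (fun s : ℤ => ∑' m : ℕ, eulerCoeff Q m * A ^ m * euler Q (Q ^ (s + m))) l
      (𝓝 (∑' m : ℕ, eulerCoeff Q m * A ^ m * g m)) := by
  obtain ⟨B, hB⟩ := exists_abs_euler_zpow_le hQ0 hQ1
  refine tendsto_tsum_of_dominated_convergence
    ((summable_abs_eulerCoeff_mul_pow hQ0.le hQ1 A).mul_right B)
    (fun m => (hg m).const_mul _) (.of_forall fun s m => ?_)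
  rw [Real.norm_eq_abs, abs_mul]
  gcongr
  exact hB _

theorem tendsto_qBessel_zpow_atBot (hQ0 : 0 < Q) (hQ1 : Q < 1) (hA : ∀ n, qPoch A Q n ≠ 0) :
    Tendsto (fun s : ℤ => qBessel Q A (Q ^ s)) atBot (𝓝 0) := by
  have hlim : ∀ m : ℕ, Tendsto (fun s : ℤ => euler Q (Q ^ (s + m))) atBot (𝓝 0) := fun m =>
    tendsto_const_nhds.congr' <| (eventually_le_atBot (-m : ℤ)).mono fun s hs =>
      (euler_zpow_eq_zero hQ0 hQ1 (by omega)).symm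
  simpa [qBessel_zpow hQ0 hQ1 hA] using
    (tendsto_tsum_eulerCoeff_mul_euler_zpow hQ0 hQ1 hlim).const_mul (euler Q A)⁻¹

theorem tendsto_qBessel_zpow_atTop (hQ0 : 0 < Q) (hQ1 : Q < 1) (hA : ∀ n, qPoch A Q n ≠ 0) :
    Tendsto (fun s : ℤ => qBessel Q A (Q ^ s)) atTop (𝓝 1) := by
  have hzpow : Tendsto (fun s : ℤ => Q ^ s) atTop (𝓝 0) := by
    simpa [Function.comp_def, Real.rpow_intCast] using
      (tendsto_rpow_atTop_of_base_lt_one Q (by linarith) hQ1).comp tendsto_intCast_atTop_atTop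
  have hlim : ∀ m : ℕ, Tendsto (fun s : ℤ => euler Q (Q ^ (s + m))) atTop (𝓝 1) := fun m => by
    rw [← euler_zero (Q := Q)]
    exact (continuousAt_euler_zero hQ0.le hQ1).tendsto.comp
      (hzpow.comp (tendsto_atTop_add_const_right _ _ tendsto_id))
  have := (tendsto_tsum_eulerCoeff_mul_euler_zpow (A := A) hQ0 hQ1 hlim).const_mul (euler Q A)⁻¹
  simp only [qBessel_zpow hQ0 hQ1 hA, mul_one] at this ⊢
  rwa [← euler, inv_mul_cancel₀ (euler_ne_zero hQ0.le hQ1 hA)] at this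

end qBessel

end QBessel

open QBessel

theorem jv_eq_qBessel (q v x : ℝ) :
    jv q v x = qBessel (q ^ 2) (q ^ (2 * v + 2)) (q ^ 2 * x ^ 2) := by
  refine tsum_congr fun n => ?_
  rw [eulerCoeff, mul_add_one_eq_two_mul_choose_two_add, pow_add, pow_mul, pow_mul, mul_pow,
    ← pow_mul]
  ring

theorem jv_zpow {q : ℝ} (hq : 0 < q) (v : ℝ) (t : ℤ) :
    jv q v (q ^ t) = qBessel (q ^ 2) (q ^ (2 * v + 2)) ((q ^ 2) ^ (t + 1)) := by
  rw [jv_eq_qBessel, zpow_add_one₀ (pow_ne_zero 2 hq.ne'), mul_comm (q ^ 2),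
    ← zpow_natCast (q ^ t), ← zpow_mul, ← zpow_natCast q 2, ← zpow_mul, mul_comm t]

section jv

variable {q v : ℝ}

theorem qPoch_rpow_ne_zero (hq : 0 < q) (hq1 : q < 1) (hv : -1 < v) (n : ℕ) :
    qPoch (q ^ (2 * v + 2)) (q ^ 2) n ≠ 0 :=
  (qPoch_pos (pow_pos hq 2).le (pow_le_one₀ hq.le hq1.le) (Real.rpow_nonneg hq.le _)
    (Real.rpow_lt_one hq.le hq1 (by linarith)) n).ne'

theorem tendsto_jv_zpow_atBot (hq : 0 < q) (hq1 : q < 1) (hv : -1 < v) :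
    Tendsto (fun t : ℤ => jv q v (q ^ t)) atBot (𝓝 0) := by
  simp only [jv_zpow hq]
  exact (tendsto_qBessel_zpow_atBot (pow_pos hq 2) (pow_lt_one₀ hq.le hq1 two_ne_zero)
    (qPoch_rpow_ne_zero hq hq1 hv)).comp (tendsto_atBot_add_const_right _ 1 tendsto_id)

theorem tendsto_jv_zpow_atTop (hq : 0 < q) (hq1 : q < 1) (hv : -1 < v) :
    Tendsto (fun t : ℤ => jv q v (q ^ t)) atTop (𝓝 1) := by
  simp only [jv_zpow hq]
  exact (tendsto_qBessel_zpow_atTop (pow_pos hq 2) (pow_lt_one₀ hq.le hq1 two_ne_zero)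
    (qPoch_rpow_ne_zero hq hq1 hv)).comp (tendsto_atTop_add_const_right _ 1 tendsto_id)

end jv

/-- for `f ∈ L_{q,1,v}` the q-Bessel Fourier transform is well defined,
tends to `0` at infinity and extends continuously to `0`. -/
theorem Fqv_welldefined_C0 (q v : ℝ) (hq : 0 < q) (hq1 : q < 1) (hv : -1 < v)
    (f : ℝ → ℝ) (hf : MemLqpv q v 1 f) :
    (∀ x ∈ Rq q,
        JacksonSummable q (fun t => f t * jv q v (x * t) * t ^ (2 * v + 1))) ∧
    Filter.Tendsto (fun n : ℤ => Fqv q v f (q ^ n)) Filter.atBot (nhds 0) ∧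
    ∃ L : ℝ, Filter.Tendsto (fun n : ℤ => Fqv q v f (q ^ n)) Filter.atTop (nhds L) := by
  set a : ℤ → ℝ := fun m => q ^ m * (f (q ^ m) * (q ^ m) ^ (2 * v + 1))
  set g : ℤ → ℝ := fun k => jv q v (q ^ k)
  have ha : Summable fun m => |a m| := hf.congr fun m => by
    simp only [a, Real.rpow_one, abs_mul, abs_abs,
      abs_of_pos (zpow_pos hq m), abs_of_nonneg (Real.rpow_nonneg (zpow_pos hq m).le _)]
  have hbot := tendsto_jv_zpow_atBot hq hq1 hv
  have htop := tendsto_jv_zpow_atTop hq hq1 hv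
  obtain ⟨M, hM⟩ := exists_abs_le_of_tendsto_atBot_atTop hbot htop
  have hterm : ∀ n m : ℤ, q ^ m * (f (q ^ m) * jv q v (q ^ n * q ^ m) * (q ^ m) ^ (2 * v + 1)) =
      a m * g (n + m) := fun n m => by
    simp only [a, g, zpow_add₀ hq.ne']
    ring
  have hF : ∀ n : ℤ, Fqv q v f (q ^ n) = cqv q v * ((1 - q) * ∑' m, a m * g (n + m)) :=
    fun n => by simp only [Fqv, jackson, hterm]
  refine ⟨?_, ?_, ?_⟩
  · rintro _ ⟨n, rfl⟩
    refine (summable_abs_mul_comp_add ha hM n).congr fun m => ?_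
    rw [← hterm, abs_mul, abs_of_pos (zpow_pos hq m)]
  · simpa [hF] using ((tendsto_tsum_mul_comp_add ha hM hbot fun m =>
      tendsto_atBot_add_const_right _ m tendsto_id).const_mul (1 - q)).const_mul (cqv q v)
  · exact ⟨_, by simpa only [hF] using ((tendsto_tsum_mul_comp_add ha hM htop fun m =>
      tendsto_atTop_add_const_right _ m tendsto_id).const_mul (1 - q)).const_mul (cqv q v)⟩
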